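/- Let M be a positive integer and let B and C be M×M complex matrices with B symmetric (Bᵀ = B). Then the following identity of 2M×2M block matrices holds: exp(fromBlocks C 0 0 (−Cᵀ)) * exp(fromBlocks 0 B 0 0) = exp(fromBlocks 0 (exp(C) * B * exp(Cᵀ)) 0 0) * exp(fromBlocks C 0 0 (−Cᵀ)), where exp denotes the matrix exponential. (This is the finite-dimensional symplectic-representation identity underlying Proposition 1(b): e^{â†Câ} e^{â†Bâ†} = e^{â† e^C B (e^C)ᵀ â†} e^{â†Câ}.) -/

import Mathlib

open Matrix

open NormedSpace in
theorem exp_fromBlocks_diag {n : Type*} [Fintype n] [DecidableEq n]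
    (A D : Matrix n n ℂ) :
    exp (fromBlocks A 0 0 D) = fromBlocks (exp A) 0 0 (exp D) := by
  letI : SeminormedRing (Matrix n n ℂ) := Matrix.linftyOpSemiNormedRing
  letI : NormedRing (Matrix n n ℂ) := Matrix.linftyOpNormedRing
  letI : NormedAlgebra ℂ (Matrix n n ℂ) := Matrix.linftyOpNormedAlgebra
  letI : NormedAlgebra ℚ (Matrix n n ℂ) := NormedAlgebra.restrictScalars ℚ ℂ _
  letI : SeminormedRing (Matrix (n ⊕ n) (n ⊕ n) ℂ) := Matrix.linftyOpSemiNormedRing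
  letI : NormedRing (Matrix (n ⊕ n) (n ⊕ n) ℂ) := Matrix.linftyOpNormedRing
  letI : NormedAlgebra ℂ (Matrix (n ⊕ n) (n ⊕ n) ℂ) := Matrix.linftyOpNormedAlgebra
  let f : Matrix n n ℂ × Matrix n n ℂ →ₐ[ℂ] Matrix (n ⊕ n) (n ⊕ n) ℂ :=
    { toFun := fun p => fromBlocks p.1 0 0 p.2
      map_one' := by simp [Matrix.fromBlocks_one]
      map_mul' := fun p q => by
        simp [Matrix.fromBlocks_multiply]
      map_zero' := by simp
      map_add' := fun p q => by
        simp [Matrix.fromBlocks_add]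
      commutes' := fun r => by
        simp [Algebra.algebraMap_eq_smul_one, ← Matrix.fromBlocks_one,
          Matrix.fromBlocks_smul] }
  have hf : Continuous f := f.toLinearMap.continuous_of_finiteDimensional
  have h := map_exp f hf (A, D)
  have h1 : (exp ((A, D) : Matrix n n ℂ × Matrix n n ℂ)).1 = exp A := Prod.fst_exp _
  have h2 : (exp ((A, D) : Matrix n n ℂ × Matrix n n ℂ)).2 = exp D := Prod.snd_exp _
  have hfA : f (A, D) = fromBlocks A 0 0 D := rfl
  have hfexp : f (exp ((A, D) : Matrix n n ℂ × Matrix n n ℂ)) =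
      fromBlocks (exp A) 0 0 (exp D) := by
    show fromBlocks _ 0 0 _ = _
    rw [h1, h2]
  rw [hfA] at h
  exact h.symm.trans hfexp

/-- **Proposition 1(b), finite-dimensional form.**
For `M × M` complex matrices `B` (symmetric) and `C`, the block-matrix identity
`exp [[C,0],[0,-Cᵀ]] * exp [[0,B],[0,0]]
  = exp [[0, exp(C) B exp(Cᵀ)],[0,0]] * exp [[C,0],[0,-Cᵀ]]` holds. -/
theorem prop1b_block (M : ℕ) (hM : 0 < M) (B C : Matrix (Fin M) (Fin M) ℂ)
    (hB : Bᵀ = B) :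
    NormedSpace.exp (fromBlocks C 0 0 (-Cᵀ)) *
        NormedSpace.exp (fromBlocks (0 : Matrix (Fin M) (Fin M) ℂ) B 0 0) =
      NormedSpace.exp
          (fromBlocks (0 : Matrix (Fin M) (Fin M) ℂ)
            (NormedSpace.exp C * B * NormedSpace.exp Cᵀ) 0 0) *
        NormedSpace.exp (fromBlocks C 0 0 (-Cᵀ)) := by
  set D : Matrix (Fin M ⊕ Fin M) (Fin M ⊕ Fin M) ℂ := fromBlocks C 0 0 (-Cᵀ) with hD
  set N : Matrix (Fin M ⊕ Fin M) (Fin M ⊕ Fin M) ℂ := fromBlocks 0 B 0 0 with hN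
  have hU : IsUnit (NormedSpace.exp D) := Matrix.isUnit_exp D
  have hexpD : NormedSpace.exp D = fromBlocks (NormedSpace.exp C) 0 0 (NormedSpace.exp (-Cᵀ)) :=
    exp_fromBlocks_diag C (-Cᵀ)
  have hinv : (NormedSpace.exp D)⁻¹ =
      fromBlocks (NormedSpace.exp (-C)) 0 0 (NormedSpace.exp Cᵀ) := by
    rw [← Matrix.exp_neg, hD]
    have : -(fromBlocks C 0 0 (-Cᵀ)) = fromBlocks (-C) 0 0 Cᵀ := by
      simp [Matrix.fromBlocks_neg]
    rw [this, exp_fromBlocks_diag]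
  have key : fromBlocks (0 : Matrix (Fin M) (Fin M) ℂ)
      (NormedSpace.exp C * B * NormedSpace.exp Cᵀ) 0 0 =
      NormedSpace.exp D * N * (NormedSpace.exp D)⁻¹ := by
    rw [hinv, hexpD, hN, Matrix.fromBlocks_multiply, Matrix.fromBlocks_multiply]
    simp [mul_assoc]
  rw [key, Matrix.exp_conj _ _ hU, mul_assoc,
    Matrix.nonsing_inv_mul _ ((Matrix.isUnit_iff_isUnit_det _).mp hU), mul_one]
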